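/- Let χ ∈ X_fin with n = |R^+(χ)| and suppose f : {1,...,n} → I gives partial products w_t with w_y(α_{f(y+1)}) ∈ R^+(χ) for all y ≤ n−1 and w_n(Π) = −Π. If χ' is a bi-homomorphism with χ' ≡ χ (same diagonal values χ'(α_i,α_i) = χ(α_i,α_i) and same products χ'(α_i,α_j)χ'(α_j,α_i) = χ(α_i,α_j)χ(α_j,α_i)), then χ' ∈ X_fin and R^+(χ') = R^+(χ). -/

import Mathlib

/-- `ℤΠ`, the free `ℤ`-module with basis `Π = {α_1,…,α_N}`. -/
abbrev Mz (N : ℕ) := Fin N →₀ ℤ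

/-- The simple "root" `α_i`, the `i`-th basis element of `ℤΠ`. -/
noncomputable def alphav {N : ℕ} (i : Fin N) : Mz N := Finsupp.single i 1

/-- A bi-homomorphism `χ : ℤΠ × ℤΠ → ℂ*`. -/
def IsBihom {N : ℕ} (χ : Mz N → Mz N → ℂˣ) : Prop :=
  (∀ a b c : Mz N, χ a (b + c) = χ a b * χ a c) ∧
  (∀ a b c : Mz N, χ (a + b) c = χ a c * χ b c)

/-- `(m)_t := 1 + t + ⋯ + t^{m-1}`. -/
noncomputable def qnum (m : ℕ) (t : ℂ) : ℂ := ∑ j ∈ Finset.range m, t ^ j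

/-- `(m)_t! := ∏_{j=1}^m (j)_t`. -/
noncomputable def qfact (m : ℕ) (t : ℂ) : ℂ := ∏ j ∈ Finset.range m, qnum (j + 1) t

/-- `(m; t₁, t₂)! := ∏_{j=1}^m (1 - t₁^{j-1} t₂)`. -/
noncomputable def tfact (m : ℕ) (t₁ t₂ : ℂ) : ℂ := ∏ j ∈ Finset.range m, (1 - t₁ ^ j * t₂)

/-- The Cartan entry `c` (off-diagonal part) attached to `q = q_{ii}` and `r = q_{ij}q_{ji}`:
`⊥` (i.e. `-∞`) if `(m)_q!(m;q,r)! ≠ 0` for all `m`, and otherwise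
`-Max{m ∈ ℤ≥0 | (m)_q!(m;q,r)! ≠ 0}`. -/
noncomputable def cEntry (q r : ℂ) : WithBot ℤ :=
  letI := Classical.propDecidable
  if ∀ m : ℕ, qfact m q * tfact m q r ≠ 0 then ⊥
  else ((-((sSup {m : ℕ | qfact m q * tfact m q r ≠ 0} : ℕ) : ℤ) : ℤ) : WithBot ℤ)

/-- The generalized Cartan matrix `c^χ_{ij}` of a bi-homomorphism `χ`. -/
noncomputable def cMat {N : ℕ} (χ : Mz N → Mz N → ℂˣ) (i j : Fin N) : WithBot ℤ :=
  if i = j then 2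
  else cEntry (χ (alphav i) (alphav i))
    ((χ (alphav i) (alphav j) : ℂ) * (χ (alphav j) (alphav i) : ℂ))

/-- `c^χ_{ij}` as an integer (junk value `0` in the `-∞` case). -/
noncomputable def cInt {N : ℕ} (χ : Mz N → Mz N → ℂˣ) (i j : Fin N) : ℤ :=
  (cMat χ i j).unbotD 0

/-- The reflection `s^χ_i ∈ Aut_ℤ(ℤΠ)`, `s^χ_i(α_j) = α_j - c^χ_{ij} α_i`,
extended `ℤ`-linearly. -/
noncomputable def sMap {N : ℕ} (χ : Mz N → Mz N → ℂˣ) (i : Fin N) (v : Mz N) : Mz N :=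
  v - (v.sum fun j n => n * cInt χ i j) • alphav i

/-- The Lusztig twist `i★χ`, `(i★χ)(α,β) := χ(s^χ_i α, s^χ_i β)`. -/
noncomputable def starB {N : ℕ} (i : Fin N) (χ : Mz N → Mz N → ℂˣ) :
    Mz N → Mz N → ℂˣ :=
  fun a b => χ (sMap χ i a) (sMap χ i b)

/-- χ' is obtained from χ by a finite sequence of Lusztig twists (χ' ∼ χ). -/
def Reachable {N : ℕ} (χ χ' : Mz N → Mz N → ℂˣ) : Prop :=
  ∃ l : List (Fin N), χ' = l.foldl (fun ψ i => starB i ψ) χ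

/-- The iterated twists χ_{f,t}: χ_{f,0} = χ and χ_{f,t} = f(t)★χ_{f,t-1}. -/
noncomputable def chif {N : ℕ} (χ : Mz N → Mz N → ℂˣ) (f : ℕ → Fin N) :
    ℕ → (Mz N → Mz N → ℂˣ)
  | 0 => χ
  | (t + 1) => starB (f (t + 1)) (chif χ f t)

/-- The partial products w_t = s^{χ_{f,1}}_{f(1)} ∘ ⋯ ∘ s^{χ_{f,t}}_{f(t)}. -/
noncomputable def wt {N : ℕ} (χ : Mz N → Mz N → ℂˣ) (f : ℕ → Fin N) :
    ℕ → (Mz N → Mz N)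
  | 0 => id
  | (t + 1) => wt χ f t ∘ sMap (chif χ f (t + 1)) (f (t + 1))

/-- The nonzero elements of ℤ≥0 Π. -/
def PosCone (N : ℕ) : Set (Mz N) := {v | v ≠ 0 ∧ ∀ k, 0 ≤ v k}

/-- The elements of -ℤ≥0 Π. -/
def NegCone (N : ℕ) : Set (Mz N) := {v | ∀ k, v k ≤ 0}

/-!
The Cartan entries of a bicharacter, hence its reflections, only see the diagonal values and the
products `χ(α_i, α_j) χ(α_j, α_i)`. For a bicharacter these data determine the quadratic form
`a ↦ χ(a, a)` on all of `ℤΠ`, and `(i★χ)(a, a) = χ(s_i a, s_i a)`, so `≡` is preserved by twisting: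
`χ` and `χ'` have the same partial products `w_t`. For either of them the longest word forces
`R⁺ = {w_t(α_{f(t+1)}) | t < n}`: a positive root that is never pulled back to a simple root
would be sent by `w_n` from the positive to the negative cone, and `w_t(α_{f(t+1)})` pulls back to
a root because a simple root on the way would make some `w_s(α_{f(s+1)})` negative.
-/

abbrev Bichar (N : ℕ) := Mz N → Mz N → ℂˣ

variable {N : ℕ}

lemma alphav_mem_posCone (i : Fin N) : alphav i ∈ PosCone N :=
  ⟨by simp [alphav], fun k => by simp only [alphav, Finsupp.single_apply]; split <;> norm_num⟩

lemma neg_mem_negCone {v : Mz N} (hv : v ∈ PosCone N) : -v ∈ NegCone N :=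
  fun k => neg_nonpos.2 (hv.2 k)

lemma disjoint_posCone_negCone : Disjoint (PosCone N) (NegCone N) :=
  Set.disjoint_left.2 fun _ hp hn => hp.1 (Finsupp.ext fun k => le_antisymm (hn k) (hp.2 k))

lemma map_mem_negCone {g : Mz N →+ Mz N} (hg : ∀ j, g (alphav j) ∈ NegCone N) {v : Mz N}
    (hv : ∀ k, 0 ≤ v k) : g v ∈ NegCone N := by
  intro m
  rw [← Finsupp.univ_sum_single v, map_sum, Finsupp.finsetSum_apply]
  refine Finset.sum_nonpos fun k _ => ?_
  rw [← Finsupp.smul_single_one, map_zsmul, Finsupp.smul_apply, smul_eq_mul]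
  exact mul_nonpos_of_nonneg_of_nonpos (hv k) (hg k m)

lemma cInt_self (χ : Bichar N) (i : Fin N) : cInt χ i i = 2 := by
  simp [cInt, cMat]

lemma sMap_eq_sub (χ : Bichar N) (i : Fin N) (v : Mz N) :
    sMap χ i v = v - Finsupp.linearCombination ℤ (cInt χ i) v • alphav i :=
  rfl

lemma sMap_add (χ : Bichar N) (i : Fin N) (u v : Mz N) :
    sMap χ i (u + v) = sMap χ i u + sMap χ i v := by
  simp only [sMap_eq_sub, map_add, add_smul]
  abel

lemma sMap_alphav_self (χ : Bichar N) (i : Fin N) : sMap χ i (alphav i) = -alphav i := by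
  simp only [sMap_eq_sub, alphav, Finsupp.linearCombination_single, cInt_self]
  module

lemma sMap_sMap (χ : Bichar N) (i : Fin N) (v : Mz N) : sMap χ i (sMap χ i v) = v := by
  simp only [sMap_eq_sub χ i v, sMap_eq_sub χ i (v - _), map_sub, map_zsmul, alphav,
    Finsupp.linearCombination_single, cInt_self]
  module

lemma wt_succ_apply (χ : Bichar N) (f : ℕ → Fin N) (t : ℕ) (v : Mz N) :
    wt χ f (t + 1) v = wt χ f t (sMap (chif χ f (t + 1)) (f (t + 1)) v) :=
  rfl

lemma wt_add (χ : Bichar N) (f : ℕ → Fin N) (u v : Mz N) :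
    ∀ t, wt χ f t (u + v) = wt χ f t u + wt χ f t v
  | 0 => rfl
  | t + 1 => by simp only [wt_succ_apply, sMap_add, wt_add]

noncomputable def wtHom (χ : Bichar N) (f : ℕ → Fin N) (t : ℕ) : Mz N →+ Mz N :=
  AddMonoidHom.mk' (wt χ f t) (wt_add χ f · · t)

lemma wt_neg (χ : Bichar N) (f : ℕ → Fin N) (t : ℕ) (v : Mz N) :
    wt χ f t (-v) = -wt χ f t v :=
  map_neg (wtHom χ f t) v

/-- `wtInv χ f t = (w_t)⁻¹ = s_{f(t)} ∘ ⋯ ∘ s_{f(1)}`. -/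
noncomputable def wtInv (χ : Bichar N) (f : ℕ → Fin N) : ℕ → Mz N → Mz N
  | 0 => id
  | t + 1 => sMap (chif χ f (t + 1)) (f (t + 1)) ∘ wtInv χ f t

lemma wt_wtInv (χ : Bichar N) (f : ℕ → Fin N) (v : Mz N) :
    ∀ t, wt χ f t (wtInv χ f t v) = v
  | 0 => rfl
  | t + 1 => by
    rw [wt_succ_apply, wtInv, Function.comp_apply, sMap_sMap, wt_wtInv]

section Bicharacters

variable {ψ ψ' : Bichar N}

noncomputable def IsBihom.addHomLeft (h : IsBihom ψ) (b : Mz N) : Mz N →+ Additive ℂˣ :=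
  AddMonoidHom.mk' (fun a => Additive.ofMul (ψ a b)) (fun a a' => h.2 a a' b)

noncomputable def IsBihom.addHomRight (h : IsBihom ψ) (a : Mz N) : Mz N →+ Additive ℂˣ :=
  AddMonoidHom.mk' (fun b => Additive.ofMul (ψ a b)) (h.1 a)

lemma addHom_ext_alphav {M : Type*} [AddMonoid M] {g g' : Mz N →+ M}
    (h : ∀ k, g (alphav k) = g' (alphav k)) : g = g' :=
  Finsupp.addHom_ext' fun k => AddMonoidHom.ext_int (h k)

lemma IsBihom.ext_alphav (hψ : IsBihom ψ) (hψ' : IsBihom ψ')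
    (h : ∀ j k, ψ (alphav j) (alphav k) = ψ' (alphav j) (alphav k)) : ψ = ψ' := by
  have hrow : ∀ j, ψ (alphav j) = ψ' (alphav j) := fun j => funext fun b =>
    DFunLike.congr_fun (addHom_ext_alphav (g := hψ.addHomRight (alphav j))
      (g' := hψ'.addHomRight (alphav j)) (h j)) b
  funext a b
  exact DFunLike.congr_fun (addHom_ext_alphav (g := hψ.addHomLeft b) (g' := hψ'.addHomLeft b)
    fun j => congrFun (hrow j) b) a

lemma IsBihom.apply_zsmul_zsmul (h : IsBihom ψ) (m k : ℤ) (a b : Mz N) :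
    ψ (m • a) (k • b) = ψ a b ^ (m * k) := by
  have hl : ψ (m • a) (k • b) = ψ a (k • b) ^ m := map_zsmul (h.addHomLeft (k • b)) m a
  have hr : ψ a (k • b) = ψ a b ^ k := map_zsmul (h.addHomRight a) k b
  rw [hl, hr, ← zpow_mul, mul_comm]

lemma IsBihom.apply_add_add (h : IsBihom ψ) (a b : Mz N) :
    ψ (a + b) (a + b) = ψ a a * ψ b b * (ψ a b * ψ b a) := by
  rw [h.2, h.1, h.1]
  ac_rfl

lemma IsBihom.mul_swap (h : IsBihom ψ) : IsBihom fun a b => ψ a b * ψ b a :=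
  ⟨fun a b c => by dsimp only; rw [h.1, h.2, mul_mul_mul_comm],
    fun a b c => by dsimp only; rw [h.2, h.1, mul_mul_mul_comm]⟩

lemma IsBihom.starB (h : IsBihom ψ) (i : Fin N) : IsBihom (starB i ψ) :=
  ⟨fun a b c => by simp only [_root_.starB, sMap_add, h.1],
    fun a b c => by simp only [_root_.starB, sMap_add, h.2]⟩

/-- The relation `χ ≡ χ'`. -/
def BihomEquiv (ψ ψ' : Bichar N) : Prop :=
  (∀ i, ψ (alphav i) (alphav i) = ψ' (alphav i) (alphav i)) ∧
  ∀ j k, (ψ (alphav j) (alphav k) : ℂ) * (ψ (alphav k) (alphav j) : ℂ) =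
    (ψ' (alphav j) (alphav k) : ℂ) * (ψ' (alphav k) (alphav j) : ℂ)

namespace BihomEquiv

lemma cInt_eq (h : BihomEquiv ψ ψ') (i j : Fin N) : cInt ψ i j = cInt ψ' i j := by
  simp only [cInt, cMat, h.1 i, h.2 i j]

lemma sMap_eq (h : BihomEquiv ψ ψ') (i : Fin N) : sMap ψ i = sMap ψ' i := by
  have : cInt ψ i = cInt ψ' i := funext (h.cInt_eq i)
  funext v
  rw [sMap_eq_sub, sMap_eq_sub, this]

lemma mul_swap_eq (hψ : IsBihom ψ) (hψ' : IsBihom ψ') (h : BihomEquiv ψ ψ') (a b : Mz N) :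
    ψ a b * ψ b a = ψ' a b * ψ' b a :=
  congrFun (congrFun (hψ.mul_swap.ext_alphav hψ'.mul_swap fun j k => Units.ext (by
    simpa only [Units.val_mul] using h.2 j k)) a) b

lemma apply_self_eq (hψ : IsBihom ψ) (hψ' : IsBihom ψ') (h : BihomEquiv ψ ψ') (a : Mz N) :
    ψ a a = ψ' a a := by
  induction a using Finsupp.induction_linear with
  | zero => rw [← zero_smul ℤ (0 : Mz N), hψ.apply_zsmul_zsmul, hψ'.apply_zsmul_zsmul]; simp
  | add a b ha hb => rw [hψ.apply_add_add, hψ'.apply_add_add, ha, hb, h.mul_swap_eq hψ hψ']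
  | single j m =>
    rw [← Finsupp.smul_single_one, hψ.apply_zsmul_zsmul, hψ'.apply_zsmul_zsmul]
    exact congrArg (· ^ (m * m)) (h.1 j)

lemma starB (hψ : IsBihom ψ) (hψ' : IsBihom ψ') (h : BihomEquiv ψ ψ') (i : Fin N) :
    BihomEquiv (starB i ψ) (starB i ψ') := by
  refine ⟨fun j => ?_, fun j k => ?_⟩
  · simp only [_root_.starB, h.sMap_eq i, h.apply_self_eq hψ hψ']
  · simp only [_root_.starB, ← Units.val_mul, h.sMap_eq i, h.mul_swap_eq hψ hψ']

end BihomEquiv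

lemma IsBihom.chif (h : IsBihom ψ) (f : ℕ → Fin N) : ∀ t, IsBihom (chif ψ f t)
  | 0 => h
  | t + 1 => (h.chif f t).starB (f (t + 1))

lemma BihomEquiv.chif (hψ : IsBihom ψ) (hψ' : IsBihom ψ') (h : BihomEquiv ψ ψ')
    (f : ℕ → Fin N) : ∀ t, BihomEquiv (chif ψ f t) (chif ψ' f t)
  | 0 => h
  | t + 1 => (h.chif hψ hψ' f t).starB (hψ.chif f t) (hψ'.chif f t) (f (t + 1))

lemma BihomEquiv.wt_eq (hψ : IsBihom ψ) (hψ' : IsBihom ψ') (h : BihomEquiv ψ ψ')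
    (f : ℕ → Fin N) : wt ψ f = wt ψ' f := by
  funext t
  induction t with
  | zero => rfl
  | succ t ih => simp only [wt, ih, ((h.chif hψ hψ' f (t + 1)).sMap_eq (f (t + 1)))]

end Bicharacters

lemma Reachable.refl (χ : Bichar N) : Reachable χ χ := ⟨[], rfl⟩

lemma Reachable.starB {χ ψ : Bichar N} (h : Reachable χ ψ) (i : Fin N) :
    Reachable χ (starB i ψ) := by
  obtain ⟨l, rfl⟩ := h
  exact ⟨l ++ [i], by rw [List.foldl_append]; rfl⟩

lemma reachable_chif (χ : Bichar N) (f : ℕ → Fin N) : ∀ t, Reachable χ (chif χ f t)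
  | 0 => Reachable.refl χ
  | t + 1 => (reachable_chif χ f t).starB (f (t + 1))

/-- Kharchenko's axioms for the positive root sets `R⁺(ψ)`, `ψ ∈ Γ`. -/
structure IsPosRootFamily (Rp : Bichar N → Set (Mz N)) (Γ : Set (Bichar N)) : Prop where
  subset_posCone : ∀ ψ ∈ Γ, Rp ψ ⊆ PosCone N
  alphav_mem : ∀ ψ ∈ Γ, ∀ i, alphav i ∈ Rp ψ
  image_sMap : ∀ ψ ∈ Γ, ∀ i, sMap ψ i '' (Rp ψ \ {alphav i}) = Rp (starB i ψ) \ {alphav i}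
  starB_starB : ∀ ψ ∈ Γ, ∀ i, starB i (starB i ψ) = ψ
  sMap_starB : ∀ ψ ∈ Γ, ∀ i, sMap (starB i ψ) i = sMap ψ i

namespace IsPosRootFamily

variable {Rp : Bichar N → Set (Mz N)} {Γ : Set (Bichar N)} {χ : Bichar N} {f : ℕ → Fin N}

lemma sMap_mem (hR : IsPosRootFamily Rp Γ) {ψ : Bichar N} (hψ : ψ ∈ Γ) {i : Fin N}
    {v : Mz N} (hv : v ∈ Rp ψ) (hne : v ≠ alphav i) : sMap ψ i v ∈ Rp (starB i ψ) :=
  (hR.image_sMap ψ hψ i ▸ Set.mem_image_of_mem _ ⟨hv, hne⟩ :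
    sMap ψ i v ∈ Rp (starB i ψ) \ {alphav i}).1

lemma sMap_mem_chif_succ (hR : IsPosRootFamily Rp Γ) (hΓ : ∀ t, chif χ f t ∈ Γ) {t : ℕ}
    {v : Mz N} (hv : v ∈ Rp (chif χ f t)) (hne : v ≠ alphav (f (t + 1))) :
    sMap (chif χ f (t + 1)) (f (t + 1)) v ∈ Rp (chif χ f (t + 1)) := by
  rw [chif, hR.sMap_starB _ (hΓ t)]
  exact hR.sMap_mem (hΓ t) hv hne

lemma sMap_mem_chif_of_succ (hR : IsPosRootFamily Rp Γ) (hΓ : ∀ t, chif χ f t ∈ Γ) {t : ℕ}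
    {v : Mz N} (hv : v ∈ Rp (chif χ f (t + 1))) (hne : v ≠ alphav (f (t + 1))) :
    sMap (chif χ f (t + 1)) (f (t + 1)) v ∈ Rp (chif χ f t) := by
  have := hR.sMap_mem (hΓ (t + 1)) hv hne
  rwa [chif, hR.starB_starB _ (hΓ t)] at this

lemma wtInv_mem (hR : IsPosRootFamily Rp Γ) (hΓ : ∀ t, chif χ f t ∈ Γ) {β : Mz N}
    (hβ : β ∈ Rp χ) : ∀ t, (∀ s < t, wtInv χ f s β ≠ alphav (f (s + 1))) →
      wtInv χ f t β ∈ Rp (chif χ f t)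
  | 0, _ => hβ
  | t + 1, hne => hR.sMap_mem_chif_succ hΓ
      (hR.wtInv_mem hΓ hβ t fun s hs => hne s (Nat.lt_succ_of_lt hs)) (hne t t.lt_succ_self)

lemma wt_mem_of_mem (hR : IsPosRootFamily Rp Γ) (hΓ : ∀ t, chif χ f t ∈ Γ) :
    ∀ s, (∀ r < s, wt χ f r (alphav (f (r + 1))) ∈ PosCone N) →
      ∀ u ∈ Rp (chif χ f s), wt χ f s u ∈ PosCone N → wt χ f s u ∈ Rp χ
  | 0, _, u, hu, _ => hu
  | s + 1, hpos, u, hu, hw => by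
    by_cases hsimple : u = alphav (f (s + 1))
    · subst hsimple
      rw [wt_succ_apply, sMap_alphav_self, wt_neg] at hw
      exact (Set.disjoint_left.1 disjoint_posCone_negCone hw
        (neg_mem_negCone (hpos s s.lt_succ_self))).elim
    · rw [wt_succ_apply] at hw ⊢
      exact hR.wt_mem_of_mem hΓ s (fun r hr => hpos r (Nat.lt_succ_of_lt hr)) _
        (hR.sMap_mem_chif_of_succ hΓ hu hsimple) hw

theorem eq_image_wt (hR : IsPosRootFamily Rp Γ) (hΓ : ∀ t, chif χ f t ∈ Γ) {n : ℕ}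
    (hneg : ∀ j, wt χ f n (alphav j) ∈ NegCone N)
    (hpos : ∀ t < n, wt χ f t (alphav (f (t + 1))) ∈ PosCone N) :
    Rp χ = (fun t => wt χ f t (alphav (f (t + 1)))) '' Set.Iio n := by
  apply Set.Subset.antisymm
  · intro β hβ
    by_contra hβ'
    have hne : ∀ s < n, wtInv χ f s β ≠ alphav (f (s + 1)) := fun s hs h =>
      hβ' ⟨s, hs, by show wt χ f s _ = β; rw [← h, wt_wtInv]⟩
    have hpos_inv := hR.subset_posCone _ (hΓ n) (hR.wtInv_mem hΓ hβ n hne)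
    have hneg_β : wt χ f n (wtInv χ f n β) ∈ NegCone N :=
      map_mem_negCone (g := wtHom χ f n) hneg hpos_inv.2
    rw [wt_wtInv] at hneg_β
    exact Set.disjoint_left.1 disjoint_posCone_negCone (hR.subset_posCone χ (hΓ 0) hβ) hneg_β
  · rintro _ ⟨t, ht, rfl⟩
    exact hR.wt_mem_of_mem hΓ t (fun r hr => hpos r (hr.trans ht)) _
      (hR.alphav_mem _ (hΓ t) _) (hpos t ht)

end IsPosRootFamily

theorem roots_depend_only_on_equiv_general {N : ℕ} (χ χ' : Mz N → Mz N → ℂˣ)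
    (hχ : IsBihom χ) (hχ' : IsBihom χ')
    (Rp : (Mz N → Mz N → ℂˣ) → Set (Mz N))
    (hRsub : ∀ ψ, (Reachable χ ψ ∨ Reachable χ' ψ) → Rp ψ ⊆ PosCone N)
    (hRsimple : ∀ ψ, (Reachable χ ψ ∨ Reachable χ' ψ) → ∀ i : Fin N, alphav i ∈ Rp ψ)
    (hRrefl : ∀ ψ, (Reachable χ ψ ∨ Reachable χ' ψ) → ∀ i : Fin N,
      sMap ψ i '' (Rp ψ \ {alphav i}) = Rp (starB i ψ) \ {alphav i})
    (hstar : ∀ ψ, (Reachable χ ψ ∨ Reachable χ' ψ) → ∀ i : Fin N,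
      starB i (starB i ψ) = ψ ∧ sMap (starB i ψ) i = sMap ψ i)
    (f : ℕ → Fin N)
    (hpos : ∀ y : ℕ, 1 ≤ y → y ≤ (Rp χ).ncard - 1 →
      wt χ f y (alphav (f (y + 1))) ∈ Rp χ)
    (hlong : wt χ f (Rp χ).ncard '' Set.range (alphav (N := N)) =
      (fun v : Mz N => -v) '' Set.range (alphav (N := N)))
    (hdiag : ∀ i : Fin N, χ (alphav i) (alphav i) = χ' (alphav i) (alphav i))
    (hprod : ∀ j k : Fin N,
      (χ (alphav j) (alphav k) : ℂ) * (χ (alphav k) (alphav j) : ℂ) =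
      (χ' (alphav j) (alphav k) : ℂ) * (χ' (alphav k) (alphav j) : ℂ)) :
    (Rp χ').Finite ∧ Rp χ' = Rp χ := by
  set n := (Rp χ).ncard
  have hwt : wt χ f = wt χ' f := BihomEquiv.wt_eq hχ hχ' ⟨hdiag, hprod⟩ f
  have hR : IsPosRootFamily Rp {ψ | Reachable χ ψ ∨ Reachable χ' ψ} :=
    ⟨hRsub, hRsimple, hRrefl, fun ψ hψ i => (hstar ψ hψ i).1, fun ψ hψ i => (hstar ψ hψ i).2⟩
  have hneg : ∀ j, wt χ f n (alphav j) ∈ NegCone N := fun j => by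
    obtain ⟨_, ⟨k, rfl⟩, hk⟩ := hlong ▸ Set.mem_image_of_mem (wt χ f n) (Set.mem_range_self j)
    exact hk ▸ neg_mem_negCone (alphav_mem_posCone k)
  have hposW : ∀ t < n, wt χ f t (alphav (f (t + 1))) ∈ PosCone N
    | 0, _ => alphav_mem_posCone (f 1)
    | t + 1, ht => hRsub χ (.inl (.refl χ)) (hpos (t + 1) t.succ_pos (by omega))
  have hroots := hR.eq_image_wt (fun t => .inl (reachable_chif χ f t)) hneg hposW
  have hroots' := hR.eq_image_wt (fun t => .inr (reachable_chif χ' f t)) (hwt ▸ hneg)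
    (hwt ▸ hposW)
  rw [← hwt, ← hroots] at hroots'
  refine ⟨?_, hroots'⟩
  rw [hroots', hroots]
  exact (Set.finite_Iio n).image _

/-- If χ has a longest word (w_y(α_{f(y+1)}) positive for y ≤ n-1 and w_n(Π) = -Π) and
χ' ≡ χ (same diagonal values and same products), then χ' is also of finite type and
R⁺(χ') = R⁺(χ). -/
theorem roots_depend_only_on_equiv {N : ℕ} (χ χ' : Mz N → Mz N → ℂˣ)
    (hχ : IsBihom χ) (hχ' : IsBihom χ')
    (Rp : (Mz N → Mz N → ℂˣ) → Set (Mz N))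
    (hRfin : (Rp χ).Finite)
    (hRsub : ∀ ψ, (Reachable χ ψ ∨ Reachable χ' ψ) → Rp ψ ⊆ PosCone N)
    (hRsimple : ∀ ψ, (Reachable χ ψ ∨ Reachable χ' ψ) → ∀ i : Fin N, alphav i ∈ Rp ψ)
    (hRrefl : ∀ ψ, (Reachable χ ψ ∨ Reachable χ' ψ) → ∀ i : Fin N,
      sMap ψ i '' (Rp ψ \ {alphav i}) = Rp (starB i ψ) \ {alphav i})
    (hstar : ∀ ψ, (Reachable χ ψ ∨ Reachable χ' ψ) → ∀ i : Fin N,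
      starB i (starB i ψ) = ψ ∧ sMap (starB i ψ) i = sMap ψ i)
    (f : ℕ → Fin N)
    (hpos : ∀ y : ℕ, 1 ≤ y → y ≤ (Rp χ).ncard - 1 →
      wt χ f y (alphav (f (y + 1))) ∈ Rp χ)
    (hlong : wt χ f (Rp χ).ncard '' Set.range (alphav (N := N)) =
      (fun v : Mz N => -v) '' Set.range (alphav (N := N)))
    (hdiag : ∀ i : Fin N, χ (alphav i) (alphav i) = χ' (alphav i) (alphav i))
    (hprod : ∀ j k : Fin N,
      (χ (alphav j) (alphav k) : ℂ) * (χ (alphav k) (alphav j) : ℂ) =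
      (χ' (alphav j) (alphav k) : ℂ) * (χ' (alphav k) (alphav j) : ℂ)) :
    (Rp χ').Finite ∧ Rp χ' = Rp χ :=
  roots_depend_only_on_equiv_general χ χ' hχ hχ' Rp hRsub hRsimple hRrefl hstar f hpos hlong hdiag
    hprod
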